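/- For each t ∈ {0,1,…,T−1} and each x ∈ ℤ, the first difference ΔW_t(x,k) = W_t(x+1,k) − W_t(x,k) is non-increasing in k: if k ≤ k' then W_t(x+1,k') − W_t(x,k') ≤ W_t(x+1,k) − W_t(x,k). -/

import Mathlib

open Filter

/-- Negative Binomial pmf with real shape `r` and success probability `p`:
`NB(r,p)(z) = Γ(z+r)/(Γ(r)·z!)·p^r·(1−p)^z` for `r > 0`, and `NB(0,p)` is
the point mass at `0`. -/
noncomputable def NB (r p : ℝ) (z : ℕ) : ℝ :=
  if r = 0 then (if z = 0 then (1 : ℝ) else 0)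
  else Real.Gamma ((z : ℝ) + r) / (Real.Gamma r * (Nat.factorial z : ℝ)) * p ^ r * (1 - p) ^ z

/-- `p_t = (β0 + N·t)/(β0 + N·t + 1)`. -/
noncomputable def pt (β0 : ℝ) (N t : ℕ) : ℝ :=
  (β0 + (N : ℝ) * (t : ℝ)) / (β0 + (N : ℝ) * (t : ℝ) + 1)

/-- Expectation `E_{(Z,K)}[f(Z,K)]` with `Z ~ NB(α0+k, p_t)` and
`K ~ NB((N−1)(α0+k), p_t)` independent. -/
noncomputable def EZK (α0 β0 : ℝ) (N t k : ℕ) (f : ℕ → ℕ → ℝ) : ℝ :=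
  ∑' z : ℕ, ∑' κ : ℕ,
    NB (α0 + (k : ℝ)) (pt β0 N t) z * NB (((N : ℝ) - 1) * (α0 + (k : ℝ))) (pt β0 N t) κ * f z κ

/-- One-period cost plus cost-to-go of ordering up to level `a` at stage `(t,k)`. -/
noncomputable def G (α0 β0 : ℝ) (N : ℕ) (cv ch cb : ℝ) (W : ℕ → ℤ → ℕ → ℝ)
    (t : ℕ) (a : ℤ) (k : ℕ) : ℝ :=
  cv * (a : ℝ)
    + ch * ∑' z : ℕ, NB (α0 + (k : ℝ)) (pt β0 N t) z * max ((a : ℝ) - (z : ℝ)) 0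
    + cb * ∑' z : ℕ, NB (α0 + (k : ℝ)) (pt β0 N t) z * max ((z : ℝ) - (a : ℝ)) 0
    + EZK α0 β0 N t k (fun z κ => W (t + 1) (a - (z : ℤ)) (k + z + κ))

/-!
Backward induction on `t`, with the invariant `IsRegularCost`: `W t` has decreasing differences
in `(x, k)`, is discretely convex in `x`, and is nonnegative of at most linear growth. With
`V y m = ch * y⁺ + cb * y⁻ + W (t + 1) y m` one has `G t a k = cv * a + E[V (a - Z) (k + Z + K)]`.
Convexity in `a` passes through the expectation pointwise. For decreasing differences, the shapes
at `k' ≥ k` exceed those at `k` by `k' - k` and `(N - 1) * (k' - k)`; since `NB (r + d) p` is the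
convolution of `NB r p` and `NB d p` (Chu–Vandermonde for `multichoose`), one may take `Z' = Z + D`
and `K' = K + E` with `D, E` independent, and the inequality becomes pointwise again. Minimising
over `a ≥ x` preserves both properties, and the linear growth, together with the finite mean
`r * (1 - p) / p`, keeps every expectation finite.

Expectations are taken in `ℝ≥0∞` first, where Fubini and rearrangements need no integrability;
linear growth is what allows the return to `ℝ`.
-/

open Finset Polynomial
open scoped ENNReal

namespace Ring

section Field

variable {K : Type*} [Field K] [CharZero K]

lemma multichoose_eq_eval_div (r : K) (n : ℕ) :
    multichoose r n = (ascPochhammer K n).eval r / n.factorial := by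
  rw [eq_div_iff (Nat.cast_ne_zero.mpr n.factorial_ne_zero), mul_comm, ← nsmul_eq_mul,
    factorial_nsmul_multichoose_eq_ascPochhammer, ascPochhammer_smeval_eq_eval]

lemma succ_mul_multichoose_succ (r : K) (n : ℕ) :
    (n + 1) * multichoose r (n + 1) = r * multichoose (r + 1) n := by
  rw [multichoose_eq_eval_div, multichoose_eq_eval_div, ascPochhammer_succ_left,
    Nat.factorial_succ]
  simp only [eval_mul, eval_X, eval_comp, eval_add, eval_one, Nat.cast_mul, Nat.cast_succ]
  field_simp

end Field

lemma multichoose_eq_Gamma {r : ℝ} (hr : 0 < r) (n : ℕ) :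
    multichoose r n = Real.Gamma (n + r) / (Real.Gamma r * n.factorial) := by
  have hΓ := (Real.Gamma_pos_of_pos hr).ne'
  have hpoch : (ascPochhammer ℝ n).eval r = Real.Gamma (n + r) / Real.Gamma r := by
    induction n with
    | zero => simp [hΓ]
    | succ n ih =>
      rw [ascPochhammer_succ_eval, ih, Nat.cast_succ, add_right_comm,
        Real.Gamma_add_one (by positivity)]
      ring
  rw [multichoose_eq_eval_div, hpoch, div_div]

/-- Chu–Vandermonde, transported through `choose (-r) n = (-1)ⁿ • multichoose r n`. -/
lemma multichoose_add {R : Type*} [CommRing R] [BinomialRing R] (r s : R) (n : ℕ) :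
    multichoose (r + s) n = ∑ ij ∈ antidiagonal n, multichoose r ij.1 * multichoose s ij.2 := by
  have h := add_choose_eq (r := -r) (s := -s) n (Commute.all _ _)
  rw [← neg_add, choose_neg'] at h
  simp only [choose_neg', Units.smul_def] at h
  rw [← (n : ℤ).negOnePow.isUnit.smul_left_cancel, h, smul_sum]
  refine sum_congr rfl fun ij hij ↦ ?_
  rw [← mem_antidiagonal.mp hij, Nat.cast_add, Int.negOnePow_add, Units.val_mul,
    smul_mul_smul_comm]

lemma hasSum_multichoose_mul_pow (r : ℝ) {q : ℝ} (hq : |q| < 1) :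
    HasSum (fun n ↦ multichoose r n * q ^ n) (1 / (1 - q) ^ r) := by
  have h := (Real.one_div_one_sub_rpow_hasFPowerSeriesOnBall_zero r).hasSum (y := q)
    (by simpa [Metric.mem_eball, edist_dist] using hq)
  simpa [FormalMultilinearSeries.ofScalars_apply_eq, multichoose_eq, mul_comm] using h

end Ring

section NegativeBinomial

variable {p r s : ℝ}

lemma NB_eq_multichoose (hr : 0 ≤ r) (z : ℕ) :
    NB r p z = Ring.multichoose r z * p ^ r * (1 - p) ^ z := by
  rcases hr.eq_or_lt with rfl | hr
  · cases z <;> simp [NB]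
  · rw [NB, if_neg hr.ne', Ring.multichoose_eq_Gamma hr]

lemma NB_nonneg (hp0 : 0 ≤ p) (hp1 : p ≤ 1) (hr : 0 ≤ r) (z : ℕ) : 0 ≤ NB r p z := by
  have : 0 ≤ 1 - p := by linarith
  unfold NB
  split_ifs with h
  · positivity
  · positivity
  · have := Real.Gamma_pos_of_pos (lt_of_le_of_ne hr (Ne.symm h))
    have := Real.Gamma_pos_of_pos (by positivity : (0:ℝ) < z + r)
    positivity

lemma hasSum_NB (hp0 : 0 < p) (hp1 : p ≤ 1) (hr : 0 ≤ r) : HasSum (NB r p) 1 := by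
  have h := (Ring.hasSum_multichoose_mul_pow r (q := 1 - p)
    (by rw [abs_lt]; constructor <;> linarith)).mul_left (p ^ r)
  rw [sub_sub_cancel, mul_one_div, div_self (Real.rpow_pos_of_pos hp0 r).ne'] at h
  exact h.congr_fun fun z ↦ by rw [NB_eq_multichoose hr]; ring

lemma NB_add_eq_sum (hp0 : 0 < p) (hr : 0 ≤ r) (hs : 0 ≤ s) (n : ℕ) :
    NB (r + s) p n = ∑ ij ∈ antidiagonal n, NB r p ij.1 * NB s p ij.2 := by
  rw [NB_eq_multichoose (add_nonneg hr hs), Ring.multichoose_add, sum_mul, sum_mul]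
  refine sum_congr rfl fun ij hij ↦ ?_
  rw [NB_eq_multichoose hr, NB_eq_multichoose hs, Real.rpow_add hp0, ← mem_antidiagonal.mp hij,
    pow_add]
  ring

lemma hasSum_NB_mul_self (hp0 : 0 < p) (hp1 : p ≤ 1) (hr : 0 ≤ r) :
    HasSum (fun z ↦ NB r p z * z) (r * ((1 - p) / p)) := by
  rw [← hasSum_nat_add_iff' 1]
  simp only [range_one, sum_singleton, Nat.cast_zero, mul_zero, sub_zero]
  have h := (hasSum_NB hp0 hp1 (by linarith : 0 ≤ r + 1)).mul_left (r * ((1 - p) / p))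
  rw [mul_one] at h
  refine h.congr_fun fun n ↦ ?_
  rw [NB_eq_multichoose hr, NB_eq_multichoose (by linarith), Real.rpow_add_one hp0.ne',
    pow_succ, Nat.cast_succ, mul_div_assoc', div_mul_eq_mul_div, eq_div_iff hp0.ne']
  linear_combination (p ^ r * (1 - p) ^ n * (1 - p) * p) * Ring.succ_mul_multichoose_succ r n

end NegativeBinomial

lemma ENNReal.tsum_prod_eq_tsum_sum_antidiagonal {A : Type*} [AddCommMonoid A] [HasAntidiagonal A]
    (g : A × A → ℝ≥0∞) : ∑' x, g x = ∑' n, ∑ ij ∈ antidiagonal n, g ij := by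
  rw [← HasAntidiagonal.sigmaAntidiagonalEquivProd.tsum_eq g, ENNReal.tsum_sigma']
  refine tsum_congr fun n ↦ ?_
  rw [tsum_fintype, ← sum_coe_sort (antidiagonal n) g]
  rfl

lemma ENNReal.toReal_add_le_add {a b c d : ℝ≥0∞} (h : a + b ≤ c + d) (hc : c ≠ ⊤) (hd : d ≠ ⊤) :
    a.toReal + b.toReal ≤ c.toReal + d.toReal := by
  have hab : a + b ≠ ⊤ := ne_top_of_le_ne_top (ENNReal.add_ne_top.mpr ⟨hc, hd⟩) h
  rw [← ENNReal.toReal_add (ENNReal.add_ne_top.mp hab).1 (ENNReal.add_ne_top.mp hab).2,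
    ← ENNReal.toReal_add hc hd]
  exact ENNReal.toReal_mono (ENNReal.add_ne_top.mpr ⟨hc, hd⟩) h

section Expectation

variable {p r s : ℝ}

noncomputable def lintegralNB (r p : ℝ) (F : ℕ → ℝ≥0∞) : ℝ≥0∞ :=
  ∑' z, ENNReal.ofReal (NB r p z) * F z

lemma lintegralNB_mono {F G : ℕ → ℝ≥0∞} (h : ∀ z, F z ≤ G z) :
    lintegralNB r p F ≤ lintegralNB r p G :=
  ENNReal.tsum_le_tsum fun z ↦ by gcongr; exact h z

lemma lintegralNB_add (F G : ℕ → ℝ≥0∞) :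
    lintegralNB r p (fun z ↦ F z + G z) = lintegralNB r p F + lintegralNB r p G := by
  simp only [lintegralNB, mul_add, ENNReal.tsum_add]

variable (hp0 : 0 < p) (hp1 : p ≤ 1)
include hp0 hp1

lemma lintegralNB_const (hr : 0 ≤ r) (c : ℝ≥0∞) : lintegralNB r p (fun _ ↦ c) = c := by
  rw [lintegralNB, ENNReal.tsum_mul_right, ← ENNReal.ofReal_tsum_of_nonneg
    (NB_nonneg hp0.le hp1 hr) (hasSum_NB hp0 hp1 hr).summable, (hasSum_NB hp0 hp1 hr).tsum_eq,
    ENNReal.ofReal_one, one_mul]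

lemma lintegralNB_add_shape (hr : 0 ≤ r) (hs : 0 ≤ s) (F : ℕ → ℝ≥0∞) :
    lintegralNB (r + s) p F = lintegralNB r p fun i ↦ lintegralNB s p fun j ↦ F (i + j) := by
  simp only [lintegralNB, ← ENNReal.tsum_mul_left, ← mul_assoc]
  rw [← ENNReal.tsum_prod (f := fun i j ↦ ENNReal.ofReal (NB r p i) * ENNReal.ofReal (NB s p j)
    * F (i + j)), ENNReal.tsum_prod_eq_tsum_sum_antidiagonal]
  refine tsum_congr fun n ↦ ?_
  rw [NB_add_eq_sum hp0 hr hs, ENNReal.ofReal_sum_of_nonneg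
    fun ij _ ↦ mul_nonneg (NB_nonneg hp0.le hp1 hr _) (NB_nonneg hp0.le hp1 hs _), sum_mul]
  refine sum_congr rfl fun ij hij ↦ ?_
  rw [ENNReal.ofReal_mul (NB_nonneg hp0.le hp1 hr _), mem_antidiagonal.mp hij]

lemma tsum_NB_mul_eq_toReal (hr : 0 ≤ r) {u : ℕ → ℝ} (hu : ∀ z, 0 ≤ u z) :
    ∑' z, NB r p z * u z = (lintegralNB r p fun z ↦ ENNReal.ofReal (u z)).toReal := by
  rw [lintegralNB, ENNReal.tsum_toReal_eq fun z ↦ ENNReal.mul_ne_top ENNReal.ofReal_ne_top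
    ENNReal.ofReal_ne_top]
  simp only [ENNReal.toReal_mul, ENNReal.toReal_ofReal (NB_nonneg hp0.le hp1 hr _),
    ENNReal.toReal_ofReal (hu _)]

lemma hasSum_NB_mul_affine (hr : 0 ≤ r) (a b : ℝ) :
    HasSum (fun z ↦ NB r p z * (a + b * z)) (a + b * (r * ((1 - p) / p))) := by
  have h := ((hasSum_NB hp0 hp1 hr).mul_left a).add ((hasSum_NB_mul_self hp0 hp1 hr).mul_left b)
  rw [mul_one] at h
  exact h.congr_fun fun z ↦ by ring

lemma summable_NB_mul_of_le (hr : 0 ≤ r) {u : ℕ → ℝ} {a b : ℝ} (hu0 : ∀ z, 0 ≤ u z)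
    (hu : ∀ z, u z ≤ a + b * z) : Summable fun z ↦ NB r p z * u z :=
  (hasSum_NB_mul_affine hp0 hp1 hr a b).summable.of_nonneg_of_le
    (fun z ↦ mul_nonneg (NB_nonneg hp0.le hp1 hr z) (hu0 z))
    (fun z ↦ mul_le_mul_of_nonneg_left (hu z) (NB_nonneg hp0.le hp1 hr z))

lemma lintegralNB_ofReal_affine (hr : 0 ≤ r) {a b : ℝ} (ha : 0 ≤ a) (hb : 0 ≤ b) :
    lintegralNB r p (fun z ↦ ENNReal.ofReal (a + b * z)) =
      ENNReal.ofReal (a + b * (r * ((1 - p) / p))) := by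
  have h := hasSum_NB_mul_affine hp0 hp1 hr a b
  rw [← h.tsum_eq, ENNReal.ofReal_tsum_of_nonneg (fun z ↦ by
    have := NB_nonneg hp0.le hp1 hr z; positivity) h.summable]
  exact tsum_congr fun z ↦ (ENNReal.ofReal_mul (NB_nonneg hp0.le hp1 hr z)).symm

lemma lintegralNB_ofReal_ne_top (hr : 0 ≤ r) {u : ℕ → ℝ} {a b : ℝ} (ha : 0 ≤ a) (hb : 0 ≤ b)
    (hu : ∀ z, u z ≤ a + b * z) : lintegralNB r p (fun z ↦ ENNReal.ofReal (u z)) ≠ ⊤ := by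
  refine ne_top_of_le_ne_top (b := lintegralNB r p fun z ↦ ENNReal.ofReal (a + b * z)) ?_
    (lintegralNB_mono fun z ↦ ENNReal.ofReal_le_ofReal (hu z))
  rw [lintegralNB_ofReal_affine hp0 hp1 hr ha hb]
  exact ENNReal.ofReal_ne_top

end Expectation

section PairExpectation

noncomputable def integralNB2 (r s p : ℝ) (f : ℕ → ℕ → ℝ) : ℝ :=
  ∑' z, ∑' κ, NB r p z * NB s p κ * f z κ

noncomputable def lintegralNB2 (r s p : ℝ) (F : ℕ → ℕ → ℝ≥0∞) : ℝ≥0∞ :=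
  lintegralNB r p fun z ↦ lintegralNB s p (F z)

def LinearGrowth₂ (f : ℕ → ℕ → ℝ) : Prop :=
  ∃ C, ∀ z κ : ℕ, 0 ≤ f z κ ∧ f z κ ≤ C * (1 + z + κ)

lemma LinearGrowth₂.nonneg {f : ℕ → ℕ → ℝ} (hf : LinearGrowth₂ f) (z κ : ℕ) : 0 ≤ f z κ :=
  (hf.choose_spec z κ).1

variable {p r s : ℝ} {f g : ℕ → ℕ → ℝ}
variable (hp0 : 0 < p) (hp1 : p ≤ 1) (hr : 0 ≤ r) (hs : 0 ≤ s)
include hp0 hp1 hr hs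

lemma lintegralNB2_ofReal_affine {c₀ c₁ c₂ : ℝ} (h₀ : 0 ≤ c₀) (h₁ : 0 ≤ c₁) (h₂ : 0 ≤ c₂) :
    lintegralNB2 r s p (fun z κ ↦ ENNReal.ofReal (c₀ + c₁ * z + c₂ * κ)) =
      ENNReal.ofReal (c₀ + c₁ * (r * ((1 - p) / p)) + c₂ * (s * ((1 - p) / p))) := by
  have hq : 0 ≤ (1 - p) / p := div_nonneg (by linarith) hp0.le
  have hinner (z : ℕ) : lintegralNB s p (fun κ ↦ ENNReal.ofReal (c₀ + c₁ * z + c₂ * κ)) =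
      ENNReal.ofReal (c₀ + c₂ * (s * ((1 - p) / p)) + c₁ * z) := by
    rw [lintegralNB_ofReal_affine hp0 hp1 hs (by positivity) h₂]
    ring_nf
  rw [lintegralNB2, funext hinner, lintegralNB_ofReal_affine hp0 hp1 hr (by positivity) h₁]
  ring_nf

lemma lintegralNB2_ofReal_ne_top (hf : LinearGrowth₂ f) :
    lintegralNB2 r s p (fun z κ ↦ ENNReal.ofReal (f z κ)) ≠ ⊤ := by
  obtain ⟨C, hC⟩ := hf
  have hC0 : 0 ≤ C := by simpa using (hC 0 0).1.trans (hC 0 0).2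
  refine ne_top_of_le_ne_top (b := lintegralNB2 r s p
    fun z κ ↦ ENNReal.ofReal (C + C * z + C * κ)) ?_ ?_
  · rw [lintegralNB2_ofReal_affine hp0 hp1 hr hs hC0 hC0 hC0]
    exact ENNReal.ofReal_ne_top
  · refine lintegralNB_mono fun z ↦ lintegralNB_mono fun κ ↦ ENNReal.ofReal_le_ofReal ?_
    linarith [(hC z κ).2]

lemma integralNB2_eq_toReal (hf : LinearGrowth₂ f) :
    integralNB2 r s p f = (lintegralNB2 r s p fun z κ ↦ ENNReal.ofReal (f z κ)).toReal := by
  obtain ⟨C, hC⟩ := hf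
  have hC0 : 0 ≤ C := by simpa using (hC 0 0).1.trans (hC 0 0).2
  have hinner (z : ℕ) : lintegralNB s p (fun κ ↦ ENNReal.ofReal (f z κ)) ≠ ⊤ :=
    lintegralNB_ofReal_ne_top hp0 hp1 hs (a := C * (1 + z)) (by positivity) hC0 fun κ ↦ by
      linarith [(hC z κ).2]
  have hsplit : integralNB2 r s p f = ∑' z, NB r p z * ∑' κ, NB s p κ * f z κ := by
    simp only [integralNB2, ← tsum_mul_left, mul_assoc]
  rw [hsplit]
  simp only [tsum_NB_mul_eq_toReal hp0 hp1 hs fun κ ↦ (hC _ κ).1]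
  rw [tsum_NB_mul_eq_toReal hp0 hp1 hr fun z ↦ ENNReal.toReal_nonneg]
  simp only [ENNReal.ofReal_toReal (hinner _), lintegralNB2]

lemma integralNB2_le_affine {c₀ c₁ c₂ : ℝ} (h₀ : 0 ≤ c₀) (h₁ : 0 ≤ c₁) (h₂ : 0 ≤ c₂)
    (hf0 : ∀ z κ, 0 ≤ f z κ) (hf : ∀ z κ, f z κ ≤ c₀ + c₁ * z + c₂ * κ) :
    integralNB2 r s p f ≤ c₀ + c₁ * (r * ((1 - p) / p)) + c₂ * (s * ((1 - p) / p)) := by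
  have hgrowth : LinearGrowth₂ f := ⟨c₀ + c₁ + c₂, fun z κ ↦ ⟨hf0 z κ, by
    nlinarith [hf z κ, (Nat.cast_nonneg z : (0:ℝ) ≤ z), (Nat.cast_nonneg κ : (0:ℝ) ≤ κ)]⟩⟩
  have hq : 0 ≤ (1 - p) / p := div_nonneg (by linarith) hp0.le
  have haffine := lintegralNB2_ofReal_affine hp0 hp1 hr hs h₀ h₁ h₂
  calc integralNB2 r s p f
      = (lintegralNB2 r s p fun z κ ↦ ENNReal.ofReal (f z κ)).toReal :=
        integralNB2_eq_toReal hp0 hp1 hr hs hgrowth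
    _ ≤ (lintegralNB2 r s p fun z κ ↦ ENNReal.ofReal (c₀ + c₁ * z + c₂ * κ)).toReal :=
        ENNReal.toReal_mono (by rw [haffine]; exact ENNReal.ofReal_ne_top) <|
          lintegralNB_mono fun z ↦ lintegralNB_mono fun κ ↦ ENNReal.ofReal_le_ofReal (hf z κ)
    _ = _ := by rw [haffine, ENNReal.toReal_ofReal (by positivity)]

lemma integralNB2_add (hf : LinearGrowth₂ f) (hg : LinearGrowth₂ g) :
    integralNB2 r s p (fun z κ ↦ f z κ + g z κ) = integralNB2 r s p f + integralNB2 r s p g := by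
  obtain ⟨C, hC⟩ := hf
  obtain ⟨D, hD⟩ := hg
  have hfg : LinearGrowth₂ fun z κ ↦ f z κ + g z κ :=
    ⟨C + D, fun z κ ↦ ⟨add_nonneg (hC z κ).1 (hD z κ).1, by linarith [(hC z κ).2, (hD z κ).2]⟩⟩
  rw [integralNB2_eq_toReal hp0 hp1 hr hs hfg, integralNB2_eq_toReal hp0 hp1 hr hs ⟨C, hC⟩,
    integralNB2_eq_toReal hp0 hp1 hr hs ⟨D, hD⟩, ← ENNReal.toReal_add
    (lintegralNB2_ofReal_ne_top hp0 hp1 hr hs ⟨C, hC⟩)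
    (lintegralNB2_ofReal_ne_top hp0 hp1 hr hs ⟨D, hD⟩)]
  simp only [lintegralNB2, ENNReal.ofReal_add (hC _ _).1 (hD _ _).1, lintegralNB_add]

lemma integralNB2_add_le_add {f' g' : ℕ → ℕ → ℝ} (hf : LinearGrowth₂ f) (hg : LinearGrowth₂ g)
    (hf' : LinearGrowth₂ f') (hg' : LinearGrowth₂ g')
    (h : ∀ z κ, f z κ + g z κ ≤ f' z κ + g' z κ) :
    integralNB2 r s p f + integralNB2 r s p g ≤ integralNB2 r s p f' + integralNB2 r s p g' := by
  simp only [integralNB2_eq_toReal hp0 hp1 hr hs, hf, hg, hf', hg']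
  refine ENNReal.toReal_add_le_add ?_ (lintegralNB2_ofReal_ne_top hp0 hp1 hr hs hf')
    (lintegralNB2_ofReal_ne_top hp0 hp1 hr hs hg')
  simp only [lintegralNB2, ← lintegralNB_add]
  refine lintegralNB_mono fun z ↦ lintegralNB_mono fun κ ↦ ?_
  rw [← ENNReal.ofReal_add (hf.nonneg z κ) (hg.nonneg z κ),
    ← ENNReal.ofReal_add (hf'.nonneg z κ) (hg'.nonneg z κ)]
  exact ENNReal.ofReal_le_ofReal (h z κ)

/-- Coupling: a sample of shape `r + d` is a sample of shape `r` plus an independent one of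
shape `d`. -/
lemma integralNB2_add_shape_add_le {d e : ℝ} (hd : 0 ≤ d) (he : 0 ≤ e) {f' g' : ℕ → ℕ → ℝ}
    (hf : LinearGrowth₂ f) (hg : LinearGrowth₂ g) (hf' : LinearGrowth₂ f')
    (hg' : LinearGrowth₂ g')
    (h : ∀ i j i' j', f' (i + j) (i' + j') + g i i' ≤ g' (i + j) (i' + j') + f i i') :
    integralNB2 (r + d) (s + e) p f' + integralNB2 r s p g ≤
      integralNB2 (r + d) (s + e) p g' + integralNB2 r s p f := by
  have hrd : 0 ≤ r + d := add_nonneg hr hd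
  have hse : 0 ≤ s + e := add_nonneg hs he
  simp only [integralNB2_eq_toReal hp0 hp1 hr hs, integralNB2_eq_toReal hp0 hp1 hrd hse, hf, hg,
    hf', hg']
  refine ENNReal.toReal_add_le_add ?_ (lintegralNB2_ofReal_ne_top hp0 hp1 hrd hse hg')
    (lintegralNB2_ofReal_ne_top hp0 hp1 hr hs hf)
  have hsplit (H : ℕ → ℕ → ℝ≥0∞) : lintegralNB2 (r + d) (s + e) p H = lintegralNB r p fun i ↦
      lintegralNB d p fun j ↦ lintegralNB s p fun i' ↦ lintegralNB e p fun j' ↦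
        H (i + j) (i' + j') := by
    simp only [lintegralNB2, lintegralNB_add_shape hp0 hp1 hr hd,
      lintegralNB_add_shape hp0 hp1 hs he]
  have hpad (H : ℕ → ℕ → ℝ≥0∞) : lintegralNB2 r s p H = lintegralNB r p fun i ↦
      lintegralNB d p fun j ↦ lintegralNB s p fun i' ↦ lintegralNB e p fun j' ↦ H i i' := by
    simp only [lintegralNB2, lintegralNB_const hp0 hp1 he, lintegralNB_const hp0 hp1 hd]
  rw [hsplit, hsplit, hpad, hpad]
  simp only [← lintegralNB_add]
  refine lintegralNB_mono fun i ↦ lintegralNB_mono fun j ↦ lintegralNB_mono fun i' ↦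
    lintegralNB_mono fun j' ↦ ?_
  rw [← ENNReal.ofReal_add (hf'.nonneg _ _) (hg.nonneg _ _),
    ← ENNReal.ofReal_add (hg'.nonneg _ _) (hf.nonneg _ _)]
  exact ENNReal.ofReal_le_ofReal (h i j i' j')

end PairExpectation

lemma integralNB2_of_fst {p r s : ℝ} (hp0 : 0 < p) (hp1 : p ≤ 1) (hs : 0 ≤ s) (u : ℕ → ℝ) :
    integralNB2 r s p (fun z _ ↦ u z) = ∑' z, NB r p z * u z := by
  simp only [integralNB2, mul_right_comm _ _ (u _), tsum_mul_left, (hasSum_NB hp0 hp1 hs).tsum_eq,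
    mul_one]

section TailInf

noncomputable def tailInf (g : ℤ → ℝ) (x : ℤ) : ℝ := ⨅ a : {a : ℤ // x ≤ a}, g a

variable {g g' : ℤ → ℝ} {x : ℤ}

lemma tailInf_le (hg : BddBelow (g '' Set.Ici x)) {a : ℤ} (ha : x ≤ a) : tailInf g x ≤ g a :=
  ciInf_le (by rwa [Set.image_eq_range] at hg) (⟨a, ha⟩ : {a : ℤ // x ≤ a})

lemma le_tailInf {c : ℝ} (h : ∀ a, x ≤ a → c ≤ g a) : c ≤ tailInf g x := by
  have : Nonempty {a : ℤ // x ≤ a} := ⟨⟨x, le_rfl⟩⟩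
  exact le_ciInf fun a ↦ h a a.2

lemma le_tailInf_add_tailInf {y : ℤ} {c : ℝ} (h : ∀ a, x ≤ a → ∀ b, y ≤ b → c ≤ g a + g' b) :
    c ≤ tailInf g x + tailInf g' y := by
  have hb (b : ℤ) (hb : y ≤ b) : c - g' b ≤ tailInf g x :=
    le_tailInf fun a ha ↦ by linarith [h a ha b hb]
  have : c - tailInf g x ≤ tailInf g' y := le_tailInf fun b hb' ↦ by linarith [hb b hb']
  linarith

variable (hg : ∀ x, BddBelow (g '' Set.Ici x))
include hg

lemma tailInf_succ_sub_le_of_antitone (hg' : ∀ x, BddBelow (g' '' Set.Ici x))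
    (hanti : Antitone fun a ↦ g' a - g a) (x : ℤ) :
    tailInf g' (x + 1) - tailInf g' x ≤ tailInf g (x + 1) - tailInf g x := by
  suffices tailInf g' (x + 1) + tailInf g x ≤ tailInf g' x + tailInf g (x + 1) by linarith
  refine le_tailInf_add_tailInf fun a ha b hb ↦ ?_
  rcases ha.eq_or_lt with rfl | ha
  · have := hanti (show x ≤ b by omega)
    linarith [tailInf_le (hg' _) hb, tailInf_le (hg x) le_rfl]
  · linarith [tailInf_le (hg' _) (show x + 1 ≤ a by omega), tailInf_le (hg x) (show x ≤ b by omega)]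

lemma monotone_tailInf_succ_sub (hmono : Monotone fun a ↦ g (a + 1) - g a) :
    Monotone fun x ↦ tailInf g (x + 1) - tailInf g x := by
  refine monotone_int_of_le_succ fun x ↦ ?_
  suffices tailInf g (x + 1) + tailInf g (x + 1) ≤ tailInf g x + tailInf g (x + 1 + 1) by linarith
  refine le_tailInf_add_tailInf fun a ha b hb ↦ ?_
  rcases ha.eq_or_lt with rfl | ha
  · have := hmono (show x ≤ b - 1 by omega)
    simp only [sub_add_cancel] at this
    linarith [tailInf_le (hg (x + 1)) (le_refl (x + 1)),
      tailInf_le (hg (x + 1)) (show x + 1 ≤ b - 1 by omega)]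
  · linarith [tailInf_le (hg _) (show x + 1 ≤ a by omega),
      tailInf_le (hg _) (show x + 1 ≤ b by omega)]

end TailInf

structure IsRegularCost (V : ℤ → ℕ → ℝ) : Prop where
  antitone_sub : ∀ x, Antitone fun k ↦ V (x + 1) k - V x k
  monotone_sub : ∀ k, Monotone fun x ↦ V (x + 1) k - V x k
  linearGrowth : ∃ C, ∀ x k, 0 ≤ V x k ∧ V x k ≤ C * (1 + |(x : ℝ)| + k)

noncomputable def stageCost (ch cb : ℝ) (V : ℤ → ℕ → ℝ) (y : ℤ) (m : ℕ) : ℝ :=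
  ch * max (y : ℝ) 0 + cb * max (-(y : ℝ)) 0 + V y m

noncomputable def expectedCost (p α c : ℝ) (V : ℤ → ℕ → ℝ) (a : ℤ) (k : ℕ) : ℝ :=
  integralNB2 (α + k) (c * (α + k)) p fun z κ ↦ V (a - z) (k + z + κ)

lemma max_zero_add_max_zero_le (t : ℝ) :
    max (t + 1) 0 + max (t + 1) 0 ≤ max t 0 + max (t + 1 + 1) 0 := by
  simp only [max_def]
  split_ifs <;> linarith

section LinearGrowth

variable {V : ℤ → ℕ → ℝ} {C : ℝ} (hC : ∀ x k, 0 ≤ V x k ∧ V x k ≤ C * (1 + |(x : ℝ)| + k))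
include hC

lemma comp_le_affine (a : ℤ) (k z κ : ℕ) :
    V (a - z) (k + z + κ) ≤ C * (1 + |(a : ℝ)| + k) + 2 * C * z + C * κ := by
  have hC0 : 0 ≤ C := by simpa using (hC 0 0).1.trans (hC 0 0).2
  have habs : |(a : ℝ) - z| ≤ |(a : ℝ)| + z := by simpa using abs_sub (a : ℝ) z
  have hV := (hC (a - z) (k + z + κ)).2
  push_cast at hV
  nlinarith [mul_le_mul_of_nonneg_left habs hC0]

lemma linearGrowth₂_comp (a : ℤ) (k : ℕ) : LinearGrowth₂ fun z κ ↦ V (a - z) (k + z + κ) := by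
  have hC0 : 0 ≤ C := by simpa using (hC 0 0).1.trans (hC 0 0).2
  refine ⟨C * (2 + |(a : ℝ)| + k), fun z κ ↦ ⟨(hC _ _).1, ?_⟩⟩
  have : 0 ≤ C * ((|(a : ℝ)| + k) * z + (1 + |(a : ℝ)| + k) * κ) := by positivity
  nlinarith [comp_le_affine hC a k z κ]

lemma expectedCost_le {p α c : ℝ} (hp0 : 0 < p) (hp1 : p ≤ 1) (hα : 0 ≤ α) (hc : 0 ≤ c)
    (a : ℤ) (k : ℕ) :
    expectedCost p α c V a k ≤
      C * (1 + (2 + c) * ((1 - p) / p) * (α + 1)) * (1 + |(a : ℝ)| + k) := by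
  have hC0 : 0 ≤ C := by simpa using (hC 0 0).1.trans (hC 0 0).2
  have hq : 0 ≤ (1 - p) / p := div_nonneg (by linarith) hp0.le
  have hmean := integralNB2_le_affine hp0 hp1 (r := α + k) (s := c * (α + k)) (by positivity)
    (by positivity) (by positivity)
    (by positivity) hC0 (fun z κ ↦ (hC _ _).1) (comp_le_affine hC a k)
  have hak : α + k ≤ (α + 1) * (1 + |(a : ℝ)| + k) := by
    nlinarith [abs_nonneg (a : ℝ), (Nat.cast_nonneg k : (0 : ℝ) ≤ k)]
  rw [expectedCost]
  nlinarith [mul_le_mul_of_nonneg_left hak (by positivity : 0 ≤ C * (2 + c) * ((1 - p) / p))]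

end LinearGrowth

namespace IsRegularCost

variable {V : ℤ → ℕ → ℝ}

lemma zero : IsRegularCost fun _ _ ↦ 0 :=
  ⟨fun _ _ _ _ ↦ le_rfl, fun _ _ _ _ ↦ le_rfl, ⟨0, fun _ _ ↦ by simp⟩⟩

lemma sub_le_sub (hV : IsRegularCost V) {u v : ℤ} (huv : u ≤ v) {m m' : ℕ} (hm : m ≤ m') :
    V (u + 1) m' - V u m' ≤ V (v + 1) m - V v m :=
  (hV.antitone_sub u hm).trans (hV.monotone_sub m huv)

lemma tailInf_sub (hV : IsRegularCost V) {c : ℝ} (hc : 0 ≤ c) :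
    IsRegularCost fun x k ↦ tailInf (fun a ↦ c * a + V a k) x - c * x := by
  obtain ⟨C, hC⟩ := hV.linearGrowth
  have hlow (k : ℕ) {x a : ℤ} (ha : x ≤ a) : c * x ≤ c * a + V a k := by
    have : c * (x : ℝ) ≤ c * a := mul_le_mul_of_nonneg_left (by exact_mod_cast ha) hc
    linarith [(hC a k).1]
  have hbdd (k : ℕ) (x : ℤ) : BddBelow ((fun a : ℤ ↦ c * a + V a k) '' Set.Ici x) :=
    ⟨c * x, by rintro _ ⟨a, ha, rfl⟩; exact hlow k ha⟩
  refine ⟨fun x k k' hk ↦ ?_, fun k x y hxy ↦ ?_, ⟨C, fun x k ↦ ⟨?_, ?_⟩⟩⟩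
  · have := tailInf_succ_sub_le_of_antitone (hbdd k) (hbdd k') (antitone_int_of_succ_le fun a ↦ by
      linarith [hV.antitone_sub a hk]) x
    push_cast
    linarith
  · have := monotone_tailInf_succ_sub (hbdd k) (fun a b hab ↦ by
      have := hV.monotone_sub k hab
      push_cast
      linarith) hxy
    push_cast
    linarith
  · linarith [le_tailInf (g := fun a ↦ c * a + V a k) (x := x) fun a ha ↦ hlow k ha]
  · linarith [tailInf_le (hbdd k x) le_rfl, (hC x k).2]

lemma stageCost (hV : IsRegularCost V) {ch cb : ℝ} (hch : 0 ≤ ch) (hcb : 0 ≤ cb) :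
    IsRegularCost (stageCost ch cb V) := by
  obtain ⟨C, hC⟩ := hV.linearGrowth
  refine ⟨fun x k k' hk ↦ ?_, fun k ↦ monotone_int_of_le_succ fun x ↦ ?_,
    ⟨ch + cb + C, fun x k ↦ ⟨?_, ?_⟩⟩⟩
  · have := hV.antitone_sub x hk
    simp only [_root_.stageCost]
    linarith
  · have := hV.monotone_sub k (show x ≤ x + 1 by omega)
    have hpos := max_zero_add_max_zero_le x
    have hneg := max_zero_add_max_zero_le (-(x + 1 + 1))
    rw [show -((x : ℝ) + 1 + 1) + 1 = -(x + 1) by ring, show -((x : ℝ) + 1) + 1 = -x by ring]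
      at hneg
    simp only [_root_.stageCost] at this ⊢
    push_cast
    nlinarith [mul_le_mul_of_nonneg_left hpos hch, mul_le_mul_of_nonneg_left hneg hcb]
  · simp only [_root_.stageCost]
    have := (hC x k).1
    positivity
  · have h1 : max (x : ℝ) 0 ≤ |(x : ℝ)| := max_le (le_abs_self _) (abs_nonneg _)
    have h2 : max (-(x : ℝ)) 0 ≤ |(x : ℝ)| := max_le (neg_le_abs _) (abs_nonneg _)
    have h3 : |(x : ℝ)| ≤ 1 + |(x : ℝ)| + k := by linarith [(Nat.cast_nonneg k : (0 : ℝ) ≤ k)]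
    simp only [_root_.stageCost]
    nlinarith [mul_le_mul_of_nonneg_left (h1.trans h3) hch,
      mul_le_mul_of_nonneg_left (h2.trans h3) hcb, (hC x k).2]

lemma linearGrowth₂_comp (hV : IsRegularCost V) (a : ℤ) (k : ℕ) :
    LinearGrowth₂ fun z κ ↦ V (a - z) (k + z + κ) := by
  obtain ⟨C, hC⟩ := hV.linearGrowth
  exact _root_.linearGrowth₂_comp hC a k

variable {p α c : ℝ} (hp0 : 0 < p) (hp1 : p ≤ 1) (hα : 0 ≤ α) (hc : 0 ≤ c)
include hp0 hp1 hα hc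

lemma expectedCost_antitone_sub (hV : IsRegularCost V) (x : ℤ) :
    Antitone fun k ↦ expectedCost p α c V (x + 1) k - expectedCost p α c V x k := by
  intro k k' hk
  have hd : (0 : ℝ) ≤ k' - k := sub_nonneg.mpr (Nat.cast_le.mpr hk)
  have := integralNB2_add_shape_add_le hp0 hp1 (r := α + k) (s := c * (α + k)) (by positivity)
    (by positivity) hd
    (mul_nonneg hc hd) (hV.linearGrowth₂_comp (x + 1) k) (hV.linearGrowth₂_comp x k)
    (hV.linearGrowth₂_comp (x + 1) k') (hV.linearGrowth₂_comp x k') fun i j i' j' ↦ by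
      have := hV.sub_le_sub (u := x - (i + j : ℕ)) (v := x - i) (by push_cast; omega)
        (m := k + i + i') (m' := k' + (i + j) + (i' + j')) (by omega)
      rw [sub_add_eq_add_sub, sub_add_eq_add_sub] at this
      linarith
  rw [show α + k + (k' - k : ℝ) = α + k' by ring,
    show c * (α + k) + c * (k' - k : ℝ) = c * (α + k') by ring] at this
  simp only [_root_.expectedCost]
  linarith

lemma expectedCost_monotone_sub (hV : IsRegularCost V) (k : ℕ) :
    Monotone fun x ↦ expectedCost p α c V (x + 1) k - expectedCost p α c V x k := by
  refine monotone_int_of_le_succ fun x ↦ ?_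
  have := integralNB2_add_le_add hp0 hp1 (r := α + k) (s := c * (α + k)) (by positivity)
    (by positivity) (hV.linearGrowth₂_comp (x + 1) k) (hV.linearGrowth₂_comp (x + 1) k)
    (hV.linearGrowth₂_comp x k) (hV.linearGrowth₂_comp (x + 1 + 1) k) fun z κ ↦ by
      have := hV.monotone_sub (k + z + κ) (show x - z ≤ x - z + 1 by omega)
      simp only [sub_add_eq_add_sub] at this
      linarith
  simp only [_root_.expectedCost]
  linarith

lemma expectedCost (hV : IsRegularCost V) : IsRegularCost (expectedCost p α c V) := by
  obtain ⟨C, hC⟩ := hV.linearGrowth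
  refine ⟨hV.expectedCost_antitone_sub hp0 hp1 hα hc, hV.expectedCost_monotone_sub hp0 hp1 hα hc,
    ⟨_, fun a k ↦ ⟨?_, expectedCost_le hC hp0 hp1 hα hc a k⟩⟩⟩
  exact tsum_nonneg fun z ↦ tsum_nonneg fun κ ↦ mul_nonneg (mul_nonneg
    (NB_nonneg hp0.le hp1 (by positivity) z) (NB_nonneg hp0.le hp1 (by positivity) κ)) (hC _ _).1

end IsRegularCost

section InventoryModel

variable {α0 β0 : ℝ} {N : ℕ} {cv ch cb : ℝ} {W : ℕ → ℤ → ℕ → ℝ} {t : ℕ}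

lemma pt_pos (hβ0 : 0 < β0) : 0 < pt β0 N t := by
  unfold pt
  positivity

lemma pt_le_one (hβ0 : 0 < β0) : pt β0 N t ≤ 1 := by
  unfold pt
  exact div_le_one_of_le₀ (by linarith) (by positivity)

lemma G_eq_expectedCost (hα0 : 0 ≤ α0) (hβ0 : 0 < β0) (hN : 1 ≤ N) (hch : 0 ≤ ch)
    (hcb : 0 ≤ cb) (hW : IsRegularCost (W (t + 1))) (a : ℤ) (k : ℕ) :
    G α0 β0 N cv ch cb W t a k =
      cv * a + expectedCost (pt β0 N t) α0 (N - 1) (stageCost ch cb (W (t + 1))) a k := by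
  have hp0 := pt_pos (N := N) (t := t) hβ0
  have hp1 := pt_le_one (N := N) (t := t) hβ0
  have hr : 0 ≤ α0 + k := by positivity
  have hs : 0 ≤ (N - 1 : ℝ) * (α0 + k) :=
    mul_nonneg (sub_nonneg.mpr (Nat.one_le_cast.mpr hN)) hr
  have hpos (z : ℕ) : max ((a : ℝ) - z) 0 ≤ |(a : ℝ)| + 1 * z :=
    max_le (by linarith [le_abs_self (a : ℝ)]) (by positivity)
  have hneg (z : ℕ) : max ((z : ℝ) - a) 0 ≤ |(a : ℝ)| + 1 * z :=
    max_le (by linarith [neg_abs_le (a : ℝ)]) (by positivity)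
  have hcost : LinearGrowth₂ fun z _ ↦ ch * max ((a : ℝ) - z) 0 + cb * max ((z : ℝ) - a) 0 := by
    simpa [stageCost] using (IsRegularCost.zero.stageCost hch hcb).linearGrowth₂_comp a k
  have hsplit : ∑' z, NB (α0 + k) (pt β0 N t) z * (ch * max ((a : ℝ) - z) 0 +
      cb * max ((z : ℝ) - a) 0) = ch * ∑' z, NB (α0 + k) (pt β0 N t) z * max ((a : ℝ) - z) 0 +
        cb * ∑' z, NB (α0 + k) (pt β0 N t) z * max ((z : ℝ) - a) 0 := by
    simp only [mul_add, mul_left_comm _ ch, mul_left_comm _ cb]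
    rw [Summable.tsum_add
        ((summable_NB_mul_of_le hp0 hp1 hr (fun _ ↦ le_max_right _ _) hpos).mul_left ch)
        ((summable_NB_mul_of_le hp0 hp1 hr (fun _ ↦ le_max_right _ _) hneg).mul_left cb),
      tsum_mul_left, tsum_mul_left]
  simp only [expectedCost, stageCost, Int.cast_sub, Int.cast_natCast, neg_sub]
  rw [integralNB2_add hp0 hp1 hr hs hcost (hW.linearGrowth₂_comp a k),
    integralNB2_of_fst hp0 hp1 hs, hsplit]
  simp only [G, EZK, integralNB2]
  ring

lemma isRegularCost_of_succ (hα0 : 0 ≤ α0) (hβ0 : 0 < β0) (hN : 1 ≤ N) (hcv : 0 ≤ cv)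
    (hch : 0 ≤ ch) (hcb : 0 ≤ cb) (hW : IsRegularCost (W (t + 1)))
    (hWt : ∀ x k, W t x k =
      (⨅ a : {a : ℤ // x ≤ a}, G α0 β0 N cv ch cb W t a.1 k) - cv * (x : ℝ)) :
    IsRegularCost (W t) := by
  have hcost := ((hW.stageCost hch hcb).expectedCost (pt_pos (N := N) (t := t) hβ0)
    (pt_le_one hβ0) hα0 (sub_nonneg.mpr (Nat.one_le_cast.mpr hN))).tailInf_sub hcv
  convert hcost using 1
  funext x k
  simp only [hWt, tailInf, G_eq_expectedCost hα0 hβ0 hN hch hcb hW]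

end InventoryModel

theorem deltaW_antitone_k_general
    (α0 β0 : ℝ) (hα0 : 0 < α0) (hβ0 : 0 < β0)
    (N T : ℕ) (hN : 1 ≤ N)
    (cv ch cb : ℝ) (hcv : 0 ≤ cv) (hch : 0 < ch) (hcb : 0 < cb)
    (W : ℕ → ℤ → ℕ → ℝ)
    (hWT : ∀ x k, W T x k = 0)
    (hW : ∀ t, t < T → ∀ x k,
      W t x k = (⨅ a : {a : ℤ // x ≤ a}, G α0 β0 N cv ch cb W t a.1 k) - cv * (x : ℝ)) :
    ∀ t, t < T → ∀ (x : ℤ) (k k' : ℕ), k ≤ k' →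
      W t (x + 1) k' - W t x k' ≤ W t (x + 1) k - W t x k := by
  have hterminal : IsRegularCost (W T) := by
    simpa only [funext₂ hWT] using IsRegularCost.zero
  have hregular (t : ℕ) (ht : t ≤ T) : IsRegularCost (W t) :=
    Nat.decreasingInduction (motive := fun t _ ↦ IsRegularCost (W t))
      (fun s hs hsucc ↦ isRegularCost_of_succ hα0.le hβ0 hN hcv hch.le hcb.le hsucc (hW s hs))
      hterminal ht
  intro t ht x k k' hk
  exact (hregular t ht.le).antitone_sub x hk

/-- The first difference `ΔW_t(x,k) = W_t(x+1,k) − W_t(x,k)` is non-increasing in `k`. -/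
theorem deltaW_antitone_k
    (α0 β0 : ℝ) (hα0 : 0 < α0) (hβ0 : 0 < β0)
    (N T : ℕ) (hN : 1 ≤ N) (hT : 1 ≤ T)
    (cv ch cb : ℝ) (hcv : 0 ≤ cv) (hch : 0 < ch) (hcb : 0 < cb)
    (W : ℕ → ℤ → ℕ → ℝ)
    (hWT : ∀ x k, W T x k = 0)
    (hW : ∀ t, t < T → ∀ x k,
      W t x k = (⨅ a : {a : ℤ // x ≤ a}, G α0 β0 N cv ch cb W t a.1 k) - cv * (x : ℝ)) :
    ∀ t, t < T → ∀ (x : ℤ) (k k' : ℕ), k ≤ k' →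
      W t (x + 1) k' - W t x k' ≤ W t (x + 1) k - W t x k :=
  deltaW_antitone_k_general α0 β0 hα0 hβ0 N T hN cv ch cb hcv hch hcb W hWT hW
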